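/- arXiv:2410.20457 — 3 statements merged into one kernel-verified Lean document; each statement's English description precedes it below -/
import Mathlib

section
/- Let d ≥ 2 and r ≥ 2. Consider bootstrap percolation with threshold r restricted to a finite domain A ⊆ ℤ^d: closed and open vertices keep their state, and an empty vertex of A becomes open when it has at least r open neighbors in A. If at any time during the evolution the open vertices contain a connected component of ℓ∞-diameter N, then this component contains at least (N+1)/2 initially open vertices. -/
/-- Nearest-neighbor adjacency on `ℤ^d`. -/
def latAdj {d : ℕ} (u v : Fin d → ℤ) : Prop := (∑ i, |u i - v i|) = 1

/-- A set `C` is connected (for nearest-neighbor adjacency, within `C`). -/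
def latConn {d : ℕ} (C : Set (Fin d → ℤ)) : Prop :=
  ∀ x ∈ C, ∀ y ∈ C,
    Relation.ReflTransGen (fun a b => latAdj a b ∧ a ∈ C ∧ b ∈ C) x y

namespace BootstrapAux

variable {d : ℕ}

/-- `ℓ∞` distance. -/
def dist' (x y : Fin d → ℤ) : ℕ := Finset.univ.sup fun i => (x i - y i).natAbs

lemma coord_le_dist' (x y : Fin d → ℤ) (i : Fin d) : (x i - y i).natAbs ≤ dist' x y := by
  unfold dist'
  exact Finset.le_sup (f := fun j => (x j - y j).natAbs) (Finset.mem_univ i)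

lemma dist'_le_iff {x y : Fin d → ℤ} {n : ℕ} :
    dist' x y ≤ n ↔ ∀ i, (x i - y i).natAbs ≤ n := by
  simp [dist', Finset.sup_le_iff]

lemma dist'_comm (x y : Fin d → ℤ) : dist' x y = dist' y x := by
  unfold dist'
  congr 1
  funext i
  omega

lemma dist'_triangle (x y z : Fin d → ℤ) : dist' x z ≤ dist' x y + dist' y z := by
  rw [dist'_le_iff]
  intro i
  calc (x i - z i).natAbs = ((x i - y i) + (y i - z i)).natAbs := by ring_nf
    _ ≤ (x i - y i).natAbs + (y i - z i).natAbs := Int.natAbs_add_le _ _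
    _ ≤ dist' x y + dist' y z :=
        add_le_add (coord_le_dist' x y i) (coord_le_dist' y z i)

lemma latAdj_struct {a v : Fin d → ℤ} (h : latAdj a v) :
    ∃ k, (a k - v k).natAbs = 1 ∧ ∀ i, i ≠ k → a i = v i := by
  unfold latAdj at h
  have hk : ∃ k, a k ≠ v k := by
    by_contra hc
    push_neg at hc
    simp [hc] at h
  obtain ⟨k, hk⟩ := hk
  have h1 : 1 ≤ |a k - v k| := Int.one_le_abs (sub_ne_zero.2 hk)
  have hsplit := Finset.add_sum_erase Finset.univ (fun i => |a i - v i|) (Finset.mem_univ k)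
  have hnn : 0 ≤ ∑ i ∈ Finset.univ.erase k, |a i - v i| :=
    Finset.sum_nonneg fun i _ => abs_nonneg _
  have hrest : ∑ i ∈ Finset.univ.erase k, |a i - v i| = 0 := by
    rw [← hsplit] at h
    linarith
  refine ⟨k, ?_, ?_⟩
  · have h2 : |a k - v k| = 1 := by
      rw [← hsplit] at h
      linarith
    have h3 : ((a k - v k).natAbs : ℤ) = 1 := by rw [← Int.abs_eq_natAbs]; exact h2
    exact_mod_cast h3
  · intro i hi
    have h4 := (Finset.sum_eq_zero_iff_of_nonneg
      (fun j _ => abs_nonneg (a j - v j))).1 hrest i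
      (Finset.mem_erase.2 ⟨hi, Finset.mem_univ i⟩)
    have h5 := abs_eq_zero.1 h4
    linarith [sub_eq_zero.1 h5]

lemma latAdj_symm {a b : Fin d → ℤ} (h : latAdj a b) : latAdj b a := by
  unfold latAdj at *
  rw [← h]
  apply Finset.sum_congr rfl
  intro i _
  rw [abs_sub_comm]

lemma latAdj_coord {a b : Fin d → ℤ} (h : latAdj a b) (i : Fin d) :
    (a i - b i).natAbs ≤ 1 := by
  obtain ⟨k, hk1, hk2⟩ := latAdj_struct h
  by_cases hik : i = k
  · subst hik; omega
  · rw [hk2 i hik]; simp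

lemma dist'_le_one_of_adj {a b : Fin d → ℤ} (h : latAdj a b) : dist' a b ≤ 1 :=
  dist'_le_iff.2 (latAdj_coord h)

lemma dist'_refined {a b v y : Fin d → ℤ} (hab : a ≠ b)
    (ha : latAdj a v) (hb : latAdj b v) {D : ℕ}
    (hay : dist' a y ≤ D) (hby : dist' b y ≤ D) : dist' v y ≤ D := by
  rw [dist'_le_iff] at hay hby ⊢
  intro k
  by_contra hcon
  push_neg at hcon
  obtain ⟨ka, ha1, ha2⟩ := latAdj_struct ha
  obtain ⟨kb, hb1, hb2⟩ := latAdj_struct hb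
  have hka : ka = k := by
    by_contra h'
    have he : a k = v k := ha2 k (fun e => h' e.symm)
    have h3 := hay k
    rw [he] at h3
    omega
  have hkb : kb = k := by
    by_contra h'
    have he : b k = v k := hb2 k (fun e => h' e.symm)
    have h3 := hby k
    rw [he] at h3
    omega
  rw [hka] at ha1 ha2
  rw [hkb] at hb1 hb2
  apply hab
  funext i
  by_cases hik : i = k
  · rw [hik]
    have h3 := hay k
    have h4 := hby k
    omega
  · rw [ha2 i hik, hb2 i hik]

/-- Discrete intermediate value theorem along a path. -/
lemma ivt {C : Set (Fin d → ℤ)} {i : Fin d} {x y : Fin d → ℤ} (hx : x ∈ C)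
    (h : Relation.ReflTransGen (fun a b => latAdj a b ∧ a ∈ C ∧ b ∈ C) x y)
    (m : ℤ) (hm : (x i ≤ m ∧ m ≤ y i) ∨ (y i ≤ m ∧ m ≤ x i)) :
    ∃ p ∈ C, p i = m := by
  induction h with
  | refl => exact ⟨x, hx, by omega⟩
  | @tail p q hxp hpq ih =>
    obtain ⟨hadj, hpC, hqC⟩ := hpq
    have h1 := latAdj_coord hadj i
    by_cases hc : (x i ≤ m ∧ m ≤ p i) ∨ (p i ≤ m ∧ m ≤ x i)
    · exact ih hc
    · exact ⟨q, hqC, by omega⟩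

/-- A finite connected set has cardinality at least its diameter plus one. -/
lemma conn_card {C : Set (Fin d → ℤ)} (hd : 0 < d) (hfin : C.Finite)
    {x y : Fin d → ℤ} (hx : x ∈ C)
    (h : Relation.ReflTransGen (fun a b => latAdj a b ∧ a ∈ C ∧ b ∈ C) x y) :
    dist' x y + 1 ≤ C.ncard := by
  classical
  have hne : (Finset.univ : Finset (Fin d)).Nonempty := ⟨⟨0, hd⟩, Finset.mem_univ _⟩
  obtain ⟨i0, -, hi0⟩ := Finset.exists_mem_eq_sup Finset.univ hne
    (fun i => (x i - y i).natAbs)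
  have hi0' : dist' x y = (x i0 - y i0).natAbs := hi0
  obtain ⟨a, b, hab, hba, hbet⟩ : ∃ a b : ℤ, a ≤ b ∧ (b + 1 - a).toNat = dist' x y + 1 ∧
      ∀ m, a ≤ m → m ≤ b → ((x i0 ≤ m ∧ m ≤ y i0) ∨ (y i0 ≤ m ∧ m ≤ x i0)) := by
    rcases le_total (x i0) (y i0) with h' | h'
    · exact ⟨x i0, y i0, h', by omega, fun m h1 h2 => Or.inl ⟨h1, h2⟩⟩
    · exact ⟨y i0, x i0, h', by omega, fun m h1 h2 => Or.inr ⟨h1, h2⟩⟩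
  have key : ∀ m : ℤ, ∃ p, (a ≤ m ∧ m ≤ b) → p ∈ C ∧ p i0 = m := by
    intro m
    by_cases hm : a ≤ m ∧ m ≤ b
    · obtain ⟨p, hp1, hp2⟩ := ivt hx h m (hbet m hm.1 hm.2)
      exact ⟨p, fun _ => ⟨hp1, hp2⟩⟩
    · exact ⟨x, fun h' => absurd h' hm⟩
  choose f hfm using key
  have hinj : Set.InjOn f (Set.Icc a b) := by
    intro m1 h1 m2 h2 he
    rw [Set.mem_Icc] at h1 h2
    have e1 := (hfm m1 h1).2
    have e2 := (hfm m2 h2).2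
    rw [← e1, ← e2, he]
  have hle := Set.ncard_le_ncard_of_injOn f
    (fun m hm => (hfm m (Set.mem_Icc.1 hm)).1) hinj hfin
  rw [← Finset.coe_Icc, Set.ncard_coe_finset, Int.card_Icc] at hle
  omega

/-- Relation restricted to a set. -/
def relOn (C : Set (Fin d → ℤ)) (p q : Fin d → ℤ) : Prop :=
  latAdj p q ∧ p ∈ C ∧ q ∈ C

/-- Reachability component of `w` inside `C`. -/
def comp (C : Set (Fin d → ℤ)) (w : Fin d → ℤ) : Set (Fin d → ℤ) :=
  {z | Relation.ReflTransGen (relOn C) w z}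

/-- The main invariant: every finite connected maximal subset `C` of `S` satisfies
`diam C + 2 ≤ 2 |C ∩ op|`. -/
def Inv (op S : Set (Fin d → ℤ)) : Prop :=
  ∀ C : Set (Fin d → ℤ), C ⊆ S → C.Finite → C.Nonempty → latConn C →
    (∀ u ∈ C, ∀ w ∈ S, latAdj u w → w ∈ C) →
    ∀ x ∈ C, ∀ y ∈ C, dist' x y + 2 ≤ 2 * (C ∩ op).ncard

lemma inv_base (hd : 0 < d) (op : Set (Fin d → ℤ)) : Inv op op := by
  intro C hsub hfin hne hconn _ x hx y hy
  have h1 := conn_card hd hfin hx (hconn x hx y hy)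
  have h2 : C ∩ op = C := Set.inter_eq_self_of_subset_left hsub
  have h3 : 0 < C.ncard := (Set.ncard_pos hfin).2 hne
  rw [h2]
  omega

lemma inv_insert (op S : Set (Fin d → ℤ)) (hinv : Inv op S)
    (v : Fin d → ℤ) (hvS : v ∉ S) (hvop : v ∉ op)
    (a b : Fin d → ℤ) (hab : a ≠ b) (haS : a ∈ S) (hbS : b ∈ S)
    (hav : latAdj a v) (hbv : latAdj b v) :
    Inv op (insert v S) := by
  classical
  intro C hCsub hCfin hCne hCconn hCmax x hx y hy
  by_cases hvC : v ∈ C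
  · -- main case : v belongs to the component
    have hS'S : C \ {v} ⊆ S := by
      intro c hc
      rcases Set.mem_insert_iff.1 (hCsub hc.1) with h' | h'
      · exact absurd (Set.mem_singleton_iff.2 h') hc.2
      · exact h'
    have hDmem : ∀ {w z : Fin d → ℤ}, z ∈ comp (C \ {v}) w → w ∈ C \ {v} → z ∈ C \ {v} := by
      intro w z hz hw
      have hz' : Relation.ReflTransGen (relOn (C \ {v})) w z := hz
      induction hz' with
      | refl => exact hw
      | tail _ h2 _ => exact h2.2.2
    have hDself : ∀ w, w ∈ comp (C \ {v}) w := fun w => Relation.ReflTransGen.refl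
    have hDsub : ∀ w ∈ C \ {v}, comp (C \ {v}) w ⊆ C \ {v} :=
      fun w hw z hz => hDmem hz hw
    have hDsubC : ∀ w ∈ C \ {v}, comp (C \ {v}) w ⊆ C :=
      fun w hw z hz => (hDsub w hw hz).1
    have hDtail : ∀ {w p q : Fin d → ℤ}, p ∈ comp (C \ {v}) w → relOn (C \ {v}) p q →
        q ∈ comp (C \ {v}) w :=
      fun hp hpq => Relation.ReflTransGen.tail hp hpq
    have hrelsymm : Symmetric (relOn (C \ {v})) :=
      fun p q h => ⟨latAdj_symm h.1, h.2.2, h.2.1⟩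
    have hreach_symm : ∀ {p q : Fin d → ℤ}, Relation.ReflTransGen (relOn (C \ {v})) p q →
        Relation.ReflTransGen (relOn (C \ {v})) q p :=
      fun h => @Std.Symm.symm _ _ (@Relation.ReflTransGen.stdSymm _ _ ⟨fun _ _ h' => hrelsymm h'⟩) _ _ h
    have hDmax : ∀ w ∈ C \ {v}, ∀ u ∈ comp (C \ {v}) w, ∀ z ∈ S, latAdj u z →
        z ∈ comp (C \ {v}) w := by
      intro w hw u hu z hzS hadj
      have huC : u ∈ C := hDsubC w hw hu
      have hzC : z ∈ C := hCmax u huC z (Set.mem_insert_of_mem _ hzS) hadj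
      have hzS' : z ∈ C \ {v} :=
        ⟨hzC, fun h' => hvS ((Set.mem_singleton_iff.1 h') ▸ hzS)⟩
      exact hDtail hu ⟨hadj, hDsub w hw hu, hzS'⟩
    have hDrestrict : ∀ {w z : Fin d → ℤ}, w ∈ C \ {v} →
        Relation.ReflTransGen (relOn (C \ {v})) w z →
        Relation.ReflTransGen (relOn (comp (C \ {v}) w)) w z := by
      intro w z hw hz
      induction hz with
      | refl => exact Relation.ReflTransGen.refl
      | @tail p q h1 h2 ih =>
        exact ih.tail ⟨h2.1, h1, Relation.ReflTransGen.tail h1 h2⟩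
    have hDconn : ∀ w ∈ C \ {v}, latConn (comp (C \ {v}) w) := by
      intro w hw p hp q hq
      have h1 : Relation.ReflTransGen (relOn (comp (C \ {v}) w)) w q := hDrestrict hw hq
      have h2 : Relation.ReflTransGen (relOn (comp (C \ {v}) w)) w p := hDrestrict hw hp
      have h2' := @Std.Symm.symm _ _ (@Relation.ReflTransGen.stdSymm _ _ ⟨
        (fun (u z : Fin d → ℤ) (hz : relOn (comp (C \ {v}) w) u z) =>
          (⟨latAdj_symm hz.1, hz.2.2, hz.2.1⟩ : relOn (comp (C \ {v}) w) z u))⟩) _ _ h2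
      exact h2'.trans h1
    have hDfin : ∀ w ∈ C \ {v}, (comp (C \ {v}) w).Finite :=
      fun w hw => hCfin.subset (hDsubC w hw)
    have hDinv : ∀ w ∈ C \ {v}, ∀ p ∈ comp (C \ {v}) w, ∀ q ∈ comp (C \ {v}) w,
        dist' p q + 2 ≤ 2 * ((comp (C \ {v}) w) ∩ op).ncard :=
      fun w hw => hinv (comp (C \ {v}) w) ((hDsub w hw).trans hS'S) (hDfin w hw)
        ⟨w, hDself w⟩ (hDconn w hw) (hDmax w hw)
    have hDpos : ∀ w ∈ C \ {v}, 1 ≤ ((comp (C \ {v}) w) ∩ op).ncard := by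
      intro w hw
      have := hDinv w hw w (hDself w) w (hDself w)
      omega
    have hCopfin : (C ∩ op).Finite := hCfin.subset Set.inter_subset_left
    have hDople : ∀ w ∈ C \ {v}, ((comp (C \ {v}) w) ∩ op).ncard ≤ (C ∩ op).ncard :=
      fun w hw => Set.ncard_le_ncard
        (Set.inter_subset_inter_left _ (hDsubC w hw)) hCopfin
    have hdisj2 : ∀ w ∈ C \ {v}, ∀ z ∈ C \ {v}, z ∉ comp (C \ {v}) w →
        ((comp (C \ {v}) w) ∩ op).ncard + ((comp (C \ {v}) z) ∩ op).ncard
          ≤ (C ∩ op).ncard := by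
      intro w hw z hz hzw
      have hdisj : Disjoint ((comp (C \ {v}) w) ∩ op) ((comp (C \ {v}) z) ∩ op) := by
        rw [Set.disjoint_left]
        intro p hp hq
        have h1 : Relation.ReflTransGen (relOn (C \ {v})) w p := hp.1
        have h2 : Relation.ReflTransGen (relOn (C \ {v})) z p := hq.1
        exact hzw (h1.trans (hreach_symm h2))
      have hsub : ((comp (C \ {v}) w) ∩ op) ∪ ((comp (C \ {v}) z) ∩ op) ⊆ C ∩ op :=
        Set.union_subset (Set.inter_subset_inter_left _ (hDsubC w hw))
          (Set.inter_subset_inter_left _ (hDsubC z hz))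
      have h3 := Set.ncard_union_eq hdisj ((hDfin w hw).subset Set.inter_subset_left)
        ((hDfin z hz).subset Set.inter_subset_left)
      have h4 := Set.ncard_le_ncard hsub hCopfin
      omega
    have hnbr : ∀ w ∈ C \ {v}, ∃ u, u ∈ comp (C \ {v}) w ∧ latAdj u v := by
      intro w hw
      have hpath := hCconn w hw.1 v hvC
      have key : ∀ p, Relation.ReflTransGen (fun a b => latAdj a b ∧ a ∈ C ∧ b ∈ C) w p →
          (p ∈ comp (C \ {v}) w ∧ p ≠ v) ∨ (∃ u, u ∈ comp (C \ {v}) w ∧ latAdj u v) := by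
        intro p hp
        induction hp with
        | refl => exact Or.inl ⟨hDself w, fun e => hw.2 (Set.mem_singleton_iff.2 e)⟩
        | @tail p q h1 h2 ih =>
          rcases ih with ⟨hpD, hpv⟩ | hfound
          · by_cases hqv : q = v
            · exact Or.inr ⟨p, hpD, hqv ▸ h2.1⟩
            · refine Or.inl ⟨hDtail hpD ⟨h2.1, ?_, ?_⟩, hqv⟩
              · exact ⟨h2.2.1, fun e => hpv (Set.mem_singleton_iff.1 e)⟩
              · exact ⟨h2.2.2, fun e => hqv (Set.mem_singleton_iff.1 e)⟩
          · exact Or.inr hfound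
      rcases key v hpath with ⟨_, hne'⟩ | hfound
      · exact absurd rfl hne'
      · exact hfound
    have haC : a ∈ C := hCmax v hvC a (Set.mem_insert_of_mem _ haS) (latAdj_symm hav)
    have hbC : b ∈ C := hCmax v hvC b (Set.mem_insert_of_mem _ hbS) (latAdj_symm hbv)
    have haS' : a ∈ C \ {v} := ⟨haC, fun e => hvS ((Set.mem_singleton_iff.1 e) ▸ haS)⟩
    have hbS' : b ∈ C \ {v} := ⟨hbC, fun e => hvS ((Set.mem_singleton_iff.1 e) ▸ hbS)⟩
    have main : ∀ z ∈ C \ {v}, dist' v z + 2 ≤ 2 * (C ∩ op).ncard := by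
      intro z hz
      by_cases hcase : a ∈ comp (C \ {v}) z ∧ b ∈ comp (C \ {v}) z
      · have hB := hDpos z hz
        have h1 := hDinv z hz a hcase.1 z (hDself z)
        have h2 := hDinv z hz b hcase.2 z (hDself z)
        have h3 : dist' v z ≤ 2 * ((comp (C \ {v}) z) ∩ op).ncard - 2 :=
          dist'_refined hab hav hbv (by omega) (by omega)
        have h4 := hDople z hz
        omega
      · have hc : ∃ c, c ∈ C \ {v} ∧ c ∉ comp (C \ {v}) z := by
          rcases not_and_or.1 hcase with h' | h'
          · exact ⟨a, haS', h'⟩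
          · exact ⟨b, hbS', h'⟩
        obtain ⟨c, hcS', hcD⟩ := hc
        obtain ⟨u, huD, huv⟩ := hnbr z hz
        have h1 : dist' v z ≤ dist' v u + dist' u z := dist'_triangle v u z
        have h2 : dist' v u ≤ 1 := by rw [dist'_comm]; exact dist'_le_one_of_adj huv
        have h3 := hDinv z hz u huD z (hDself z)
        have h4 := hdisj2 z hz c hcS' hcD
        have h5 := hDpos c hcS'
        omega
    by_cases hxv : x = v
    · by_cases hyv : y = v
      · rw [hxv, hyv]
        have h0 : dist' v v ≤ 0 := dist'_le_iff.2 fun i => by simp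
        have h1 := hDpos a haS'
        have h2 := hDople a haS'
        omega
      · subst hxv
        exact main y ⟨hy, fun e => hyv (Set.mem_singleton_iff.1 e)⟩
    · by_cases hyv : y = v
      · subst hyv
        rw [dist'_comm]
        exact main x ⟨hx, fun e => hxv (Set.mem_singleton_iff.1 e)⟩
      · have hxS' : x ∈ C \ {v} := ⟨hx, fun e => hxv (Set.mem_singleton_iff.1 e)⟩
        have hyS' : y ∈ C \ {v} := ⟨hy, fun e => hyv (Set.mem_singleton_iff.1 e)⟩
        by_cases hxy : y ∈ comp (C \ {v}) x
        · have h1 := hDinv x hxS' x (hDself x) y hxy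
          have h2 := hDople x hxS'
          omega
        · obtain ⟨ux, huxD, huxv⟩ := hnbr x hxS'
          obtain ⟨uy, huyD, huyv⟩ := hnbr y hyS'
          have t1 : dist' x y ≤ dist' x ux + dist' ux y := dist'_triangle _ _ _
          have t2 : dist' ux y ≤ dist' ux v + dist' v y := dist'_triangle _ _ _
          have t3 : dist' v y ≤ dist' v uy + dist' uy y := dist'_triangle _ _ _
          have e1 : dist' ux v ≤ 1 := dist'_le_one_of_adj huxv
          have e2 : dist' v uy ≤ 1 := by rw [dist'_comm]; exact dist'_le_one_of_adj huyv
          have b1 := hDinv x hxS' x (hDself x) ux huxD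
          have b2 := hDinv y hyS' uy huyD y (hDself y)
          have hsum := hdisj2 x hxS' y hyS' hxy
          omega
  · -- v not in the component: the component lives in S
    have hCS : C ⊆ S := by
      intro c hc
      rcases Set.mem_insert_iff.1 (hCsub hc) with h' | h'
      · exact absurd (h' ▸ hc) hvC
      · exact h'
    exact hinv C hCS hCfin hCne hCconn
      (fun u hu w hw => hCmax u hu w (Set.mem_insert_of_mem _ hw)) x hx y hy

lemma inv_union (op S0 : Set (Fin d → ℤ)) (F : Finset (Fin d → ℤ)) (hinv : Inv op S0)
    (hF : ∀ v ∈ F, v ∉ op ∧ v ∉ S0 ∧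
      ∃ a' b', a' ≠ b' ∧ a' ∈ S0 ∧ b' ∈ S0 ∧ latAdj a' v ∧ latAdj b' v) :
    Inv op (S0 ∪ ↑F) := by
  classical
  induction F using Finset.induction_on with
  | empty => simpa using hinv
  | @insert v F' hvF' ih =>
    have h1 : Inv op (S0 ∪ ↑F') := ih (fun w hw => hF w (Finset.mem_insert_of_mem hw))
    obtain ⟨hvop, hvS0, a', b', hab, haS, hbS, hav, hbv⟩ :=
      hF v (Finset.mem_insert_self v F')
    have heq : (S0 ∪ ↑(insert v F') : Set (Fin d → ℤ)) = insert v (S0 ∪ ↑F') := by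
      rw [Finset.coe_insert, Set.union_insert]
    rw [heq]
    refine inv_insert op _ h1 v ?_ hvop a' b' hab (Set.mem_union_left _ haS)
      (Set.mem_union_left _ hbS) hav hbv
    intro h'
    rcases (Set.mem_union _ _ _).1 h' with h1' | h1'
    · exact hvS0 h1'
    · exact hvF' (Finset.mem_coe.1 h1')

end BootstrapAux

/-- Bootstrap percolation with threshold `r ≥ 2` restricted to a finite domain `A ⊆ ℤ^d`:
`op` are the initially open vertices, `cl` the closed ones (disjoint from `op`); at each step
an empty vertex of `A` having at least `r` open neighbors in `A` becomes open.  If at some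
time the open set contains a connected component of `ℓ∞`-diameter `N`, then that component
contains at least `(N+1)/2` initially open vertices. -/
theorem bootstrap_component_initial_open (d r : ℕ) (hd : 2 ≤ d) (hr : 2 ≤ r)
    (A : Set (Fin d → ℤ)) (hA : A.Finite)
    (op cl : Set (Fin d → ℤ)) (hdisj : Disjoint op cl)
    (O : ℕ → Set (Fin d → ℤ))
    (hO0 : O 0 = op)
    (hstep : ∀ t, O (t + 1) =
      O t ∪ {v | v ∈ A ∧ v ∉ cl ∧ r ≤ {u | u ∈ A ∧ latAdj u v ∧ u ∈ O t}.ncard})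
    (t : ℕ) (C : Set (Fin d → ℤ))
    (hCsub : C ⊆ O t) (hCne : C.Nonempty) (hCconn : latConn C)
    (hCmax : ∀ u ∈ C, ∀ v ∈ O t, latAdj u v → v ∈ C)
    (N : ℕ)
    (hdiam₁ : ∃ x ∈ C, ∃ y ∈ C, (Finset.univ.sup fun i => (x i - y i).natAbs) = N)
    (hdiam₂ : ∀ x ∈ C, ∀ y ∈ C, (Finset.univ.sup fun i => (x i - y i).natAbs) ≤ N) :
    N + 1 ≤ 2 * (C ∩ op).ncard := by
  classical
  have hd0 : 0 < d := by omega
  have hmono : ∀ t', O t' ⊆ O (t' + 1) := fun t' => by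
    rw [hstep t']; exact Set.subset_union_left
  have hop : ∀ t', op ⊆ O t' := by
    intro t'
    induction t' with
    | zero => rw [hO0]
    | succ n ih => exact ih.trans (hmono n)
  have hinv : ∀ t', BootstrapAux.Inv op (O t') := by
    intro t'
    induction t' with
    | zero => rw [hO0]; exact BootstrapAux.inv_base hd0 op
    | succ n ih =>
      have hNfin : ({v | v ∈ A ∧ v ∉ cl ∧
          r ≤ {u | u ∈ A ∧ latAdj u v ∧ u ∈ O n}.ncard} \ O n).Finite :=
        hA.subset (fun v hv => hv.1.1)
      have heq : O (n + 1) = O n ∪ ↑hNfin.toFinset := by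
        rw [hstep n, Set.Finite.coe_toFinset, Set.union_diff_self]
      rw [heq]
      apply BootstrapAux.inv_union op (O n) hNfin.toFinset ih
      intro v hv
      rw [Set.Finite.mem_toFinset] at hv
      obtain ⟨⟨hvA, hvcl, hvr⟩, hvO⟩ := hv
      have hfinU : {u | u ∈ A ∧ latAdj u v ∧ u ∈ O n}.Finite :=
        hA.subset fun u hu => hu.1
      have h2 : 1 < {u | u ∈ A ∧ latAdj u v ∧ u ∈ O n}.ncard := by omega
      obtain ⟨a, b, ha, hb, hab⟩ := (Set.one_lt_ncard_iff hfinU).1 h2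
      exact ⟨fun h' => hvO (hop n h'), hvO, a, b, hab, ha.2.2, hb.2.2, ha.2.1, hb.2.1⟩
  obtain ⟨x0, hx0⟩ := hCne
  have hCfin : C.Finite := by
    apply Set.Finite.subset (Set.Finite.pi (fun i => Set.finite_Icc (x0 i - N) (x0 i + N)))
    intro y hy
    rw [Set.mem_univ_pi]
    intro i
    have h1 : (x0 i - y i).natAbs ≤ N :=
      le_trans (Finset.le_sup (f := fun j => (x0 j - y j).natAbs) (Finset.mem_univ i))
        (hdiam₂ x0 hx0 y hy)
    rw [Set.mem_Icc]
    omega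
  obtain ⟨x, hx, y, hy, hNxy⟩ := hdiam₁
  have hmain := hinv t C hCsub hCfin ⟨x0, hx0⟩ hCconn hCmax x hx y hy
  have hdd : BootstrapAux.dist' x y = N := hNxy
  omega
end

section
/- For any spin configuration σ ∈ {−1,1}^{𝕋_N^d} and two vertices u,v of the torus 𝕋_N^d, if neither u nor v is enclosed by a spin interface, then σ(u) = σ(v). -/
/-- Nearest-neighbor adjacency on the torus `𝕋_N^d = (ℤ/Nℤ)^d`. -/
def torusAdj {N d : ℕ} (u v : Fin d → ZMod N) : Prop :=
  u ≠ v ∧ ∃ i : Fin d,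
    v = Function.update u i (u i + 1) ∨ v = Function.update u i (u i - 1)

/-- A subset `S` of the torus is connected (within `S`). -/
def torusConn {N d : ℕ} (S : Set (Fin d → ZMod N)) : Prop :=
  ∀ x ∈ S, ∀ y ∈ S,
    Relation.ReflTransGen (fun a b => torusAdj a b ∧ a ∈ S ∧ b ∈ S) x y

/-- Inner vertex boundary of a set. -/
def innerBdry {N d : ℕ} (A : Set (Fin d → ZMod N)) : Set (Fin d → ZMod N) :=
  {x | x ∈ A ∧ ∃ y, y ∉ A ∧ torusAdj x y}

/-- Outer vertex boundary of a set. -/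
def outerBdry {N d : ℕ} (A : Set (Fin d → ZMod N)) : Set (Fin d → ZMod N) :=
  innerBdry Aᶜ

/-- `∂ₑA` is a spin interface for `σ`: one constant sign inside, the opposite outside. -/
def IsInterface {N d : ℕ} (σ : (Fin d → ZMod N) → ℤ) (A : Set (Fin d → ZMod N)) : Prop :=
  ((∀ x ∈ innerBdry A, σ x = -1) ∧ (∀ y ∈ outerBdry A, σ y = 1)) ∨
  ((∀ x ∈ innerBdry A, σ x = 1) ∧ (∀ y ∈ outerBdry A, σ y = -1))

/-- `v` is enclosed by an interface: `v ∈ A` for some simply connected `A` of cardinality at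
most half the torus whose edge boundary is an interface for `σ`. -/
def Enclosed {N d : ℕ} [NeZero N] (σ : (Fin d → ZMod N) → ℤ) (v : Fin d → ZMod N) : Prop :=
  ∃ A : Set (Fin d → ZMod N), torusConn A ∧ torusConn Aᶜ ∧
    2 * A.ncard ≤ Fintype.card (Fin d → ZMod N) ∧ IsInterface σ A ∧ v ∈ A

namespace TorusInterfaceAux
variable {N d : ℕ}
variable {N d : ℕ}

lemma torusAdj_symm {u v : Fin d → ZMod N} (h : torusAdj u v) : torusAdj v u := by
  obtain ⟨hne, i, h | h⟩ := h
  · refine ⟨hne.symm, i, Or.inr ?_⟩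
    subst h; ext j; by_cases hj : j = i <;> simp [hj, Function.update]
  · refine ⟨hne.symm, i, Or.inl ?_⟩
    subst h; ext j; by_cases hj : j = i <;> simp [hj, Function.update]

def R (S : Set (Fin d → ZMod N)) (a b : Fin d → ZMod N) : Prop :=
  torusAdj a b ∧ a ∈ S ∧ b ∈ S

lemma R_symm (S : Set (Fin d → ZMod N)) : Symmetric (R S) :=
  fun _ _ h => ⟨torusAdj_symm h.1, h.2.2, h.2.1⟩

lemma reach_symm {S : Set (Fin d → ZMod N)} {x y : Fin d → ZMod N}
    (h : Relation.ReflTransGen (R S) x y) : Relation.ReflTransGen (R S) y x :=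
  (@Relation.ReflTransGen.stdSymm _ _ ⟨fun _ _ h => R_symm S h⟩).symm _ _ h

lemma reach_mem {S : Set (Fin d → ZMod N)} {x y : Fin d → ZMod N} (hx : x ∈ S)
    (h : Relation.ReflTransGen (R S) x y) : y ∈ S := by
  induction h with
  | refl => exact hx
  | tail _ hbc _ => exact hbc.2.2

def comp (S : Set (Fin d → ZMod N)) (x : Fin d → ZMod N) : Set (Fin d → ZMod N) :=
  {y | Relation.ReflTransGen (R S) x y}

lemma mem_comp_self (S : Set (Fin d → ZMod N)) (x : Fin d → ZMod N) : x ∈ comp S x :=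
  Relation.ReflTransGen.refl

lemma comp_subset {S : Set (Fin d → ZMod N)} {x : Fin d → ZMod N} (hx : x ∈ S) :
    comp S x ⊆ S := fun _ h => reach_mem hx h

lemma comp_closed {S : Set (Fin d → ZMod N)} {x y z : Fin d → ZMod N} (hx : x ∈ S)
    (hy : y ∈ comp S x) (hz : z ∈ S) (hadj : torusAdj y z) : z ∈ comp S x :=
  hy.tail ⟨hadj, reach_mem hx hy, hz⟩

lemma reach_comp {S : Set (Fin d → ZMod N)} {x y : Fin d → ZMod N}
    (h : Relation.ReflTransGen (R S) x y) :
    Relation.ReflTransGen (R (comp S x)) x y := by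
  induction h with
  | refl => exact .refl
  | tail hxb hbc ih => exact ih.tail ⟨hbc.1, hxb, hxb.tail hbc⟩

lemma reach_mono {S T : Set (Fin d → ZMod N)} (hST : S ⊆ T) {x y : Fin d → ZMod N}
    (h : Relation.ReflTransGen (R S) x y) : Relation.ReflTransGen (R T) x y :=
  Relation.ReflTransGen.mono (fun _ _ hr => ⟨hr.1, hST hr.2.1, hST hr.2.2⟩) _ _ h

lemma torusConn_comp {S : Set (Fin d → ZMod N)} {x : Fin d → ZMod N} (hx : x ∈ S) :
    torusConn (comp S x) := by
  intro a ha b hb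
  exact ((@Relation.ReflTransGen.stdSymm _ _ ⟨fun _ _ h => R_symm _ h⟩).symm _ _ (reach_comp ha)).trans (reach_comp hb)

lemma adj_update (hN : (1 : ZMod N) ≠ 0) (x : Fin d → ZMod N) (i : Fin d) :
    torusAdj x (Function.update x i (x i + 1)) := by
  refine ⟨fun h => ?_, i, Or.inl rfl⟩
  have := congrFun h i
  simp at this
  exact hN this

lemma reach_add (hN : (1 : ZMod N) ≠ 0) (x : Fin d → ZMod N) (i : Fin d) (k : ℕ) :
    Relation.ReflTransGen torusAdj x (Function.update x i (x i + k)) := by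
  induction k with
  | zero =>
      have h0 : Function.update x i (x i + ((0:ℕ):ZMod N)) = x := by simp
      rw [h0]
  | succ k ih =>
      refine ih.tail ?_
      have h := adj_update hN (Function.update x i (x i + k)) i
      simpa [Function.update_idem, add_assoc] using h

lemma reach_update (hN : (1 : ZMod N) ≠ 0) [NeZero N] (x : Fin d → ZMod N) (i : Fin d)
    (c : ZMod N) : Relation.ReflTransGen torusAdj x (Function.update x i c) := by
  have h := reach_add hN x i (c - x i).val
  rwa [ZMod.natCast_val, ZMod.cast_id, add_sub_cancel] at h

lemma torus_conn (hN : (1 : ZMod N) ≠ 0) [NeZero N] (x y : Fin d → ZMod N) :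
    Relation.ReflTransGen torusAdj x y := by
  suffices H : ∀ l : List (Fin d), ∀ x y : Fin d → ZMod N, (∀ i, i ∉ l → x i = y i) →
      Relation.ReflTransGen torusAdj x y by
    exact H (List.finRange d) x y fun i hi => absurd (List.mem_finRange i) hi
  intro l
  induction l with
  | nil =>
      intro x y h
      have : x = y := funext fun i => h i List.not_mem_nil
      exact this ▸ .refl
  | cons i l ih =>
      intro x y h
      refine (reach_update hN x i (y i)).trans (ih _ _ fun j hj => ?_)
      by_cases hji : j = i
      · subst hji; simp
      · rw [Function.update_of_ne hji]
        exact h j (by simp [hji, hj])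

lemma exit_lemma {S : Set (Fin d → ZMod N)} {x u : Fin d → ZMod N} (hx : x ∈ Sᶜ) (hu : u ∈ S)
    (hp : Relation.ReflTransGen torusAdj x u) :
    ∃ w ∈ comp Sᶜ x, ∃ w', w' ∈ S ∧ torusAdj w w' := by
  suffices H : ∀ a, Relation.ReflTransGen torusAdj x a →
      (∃ w ∈ comp Sᶜ x, ∃ w', w' ∈ S ∧ torusAdj w w') ∨ a ∈ comp Sᶜ x by
    rcases H u hp with h | h
    · exact h
    · exact absurd hu (comp_subset hx h)
  intro a ha
  induction ha with
  | refl => exact Or.inr (mem_comp_self _ _)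
  | @tail b c _ hbc ih =>
      rcases ih with h | hb
      · exact Or.inl h
      · by_cases hc : c ∈ S
        · exact Or.inl ⟨b, hb, c, hc, hbc⟩
        · exact Or.inr (comp_closed hx hb hc hbc)

/-- The filled component of `u` (complement of `v`'s component in the complement
of `u`'s spin component). -/
def fill (σ : (Fin d → ZMod N) → ℤ) (u v : Fin d → ZMod N) : Set (Fin d → ZMod N) :=
  (comp (comp {w | σ w = σ u} u)ᶜ v)ᶜ

lemma construct (hN : (1 : ZMod N) ≠ 0) [NeZero N] (σ : (Fin d → ZMod N) → ℤ)
    (u v : Fin d → ZMod N) (hne : σ u ≠ σ v) :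
    torusConn (fill σ u v) ∧ torusConn (fill σ u v)ᶜ ∧ u ∈ fill σ u v ∧
      (∀ x ∈ innerBdry (fill σ u v), σ x = σ u) ∧
      (∀ y ∈ outerBdry (fill σ u v), σ y ≠ σ u) ∧
      fill σ u v ⊆ (fill σ v u)ᶜ := by
  set S : Set (Fin d → ZMod N) := {w | σ w = σ u} with hS
  have huS : u ∈ S := rfl
  set A0 : Set (Fin d → ZMod N) := comp S u with hA0
  set B : Set (Fin d → ZMod N) := comp A0ᶜ v with hB
  have hAdef : fill σ u v = Bᶜ := rfl
  have hvA0c : v ∈ A0ᶜ := by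
    intro h
    have : σ v = σ u := comp_subset huS h
    exact hne this.symm
  have hBsub : B ⊆ A0ᶜ := comp_subset hvA0c
  have hA0A : A0 ⊆ Bᶜ := fun w hw hwB => hBsub hwB hw
  have huA : u ∈ Bᶜ := hA0A (mem_comp_self _ _)
  -- inner boundary of A lies in A0
  have hinner : ∀ x ∈ Bᶜ, ∀ y, y ∈ B → torusAdj x y → x ∈ A0 := by
    intro x hx y hy hadj
    by_contra hx0
    exact hx (comp_closed hvA0c hy hx0 (torusAdj_symm hadj))
  -- outer boundary spins differ from σ u
  have houter : ∀ y ∈ B, ∀ x ∈ Bᶜ, torusAdj y x → σ y ≠ σ u := by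
    intro y hy x hx hadj hsy
    by_cases hx0 : x ∈ A0
    · exact hBsub hy (comp_closed huS hx0 hsy (torusAdj_symm hadj))
    · exact hx (comp_closed hvA0c hy hx0 hadj)
  -- reachability within A from u
  have hreachA : ∀ x ∈ Bᶜ, Relation.ReflTransGen (R Bᶜ) u x := by
    intro x hx
    by_cases hx0 : x ∈ A0
    · exact reach_mono hA0A (reach_comp hx0)
    · have hCA : comp A0ᶜ x ⊆ Bᶜ := by
        intro z hz hzB
        exact hx ((hzB.trans (reach_symm hz)))
      obtain ⟨w, hwC, w', hw', hadj⟩ := exit_lemma hx0 (mem_comp_self S u) (torus_conn hN x u)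
      have p1 : Relation.ReflTransGen (R Bᶜ) u w' := reach_mono hA0A (reach_comp hw')
      have p2 : Relation.ReflTransGen (R Bᶜ) w x :=
        reach_symm (reach_mono hCA (reach_comp hwC))
      exact (p1.tail ⟨torusAdj_symm hadj, hA0A hw', hCA hwC⟩).trans p2
  have hconnA : torusConn Bᶜ := fun a ha b hb => (reach_symm (hreachA a ha)).trans (hreachA b hb)
  have hconnAc : torusConn (Bᶜ)ᶜ := by
    rw [compl_compl]
    exact torusConn_comp hvA0c
  refine ⟨hconnA, hconnAc, huA, ?_, ?_, ?_⟩
  · rintro x ⟨hx, y, hy, hadj⟩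
    exact comp_subset huS (hinner x hx y (not_not.mp hy) hadj)
  · rintro y ⟨hy, x, hx, hadj⟩
    have hy' : y ∈ B := by rwa [hAdef, compl_compl] at hy
    have hx' : x ∈ Bᶜ := not_not.mp hx
    exact houter y hy' x hx' hadj
  · -- fill σ u v ⊆ (fill σ v u)ᶜ
    have hA0v : comp {w | σ w = σ v} v ⊆ B := by
      intro y hy
      induction hy with
      | refl => exact mem_comp_self _ _
      | @tail b c _ hbc ih =>
          by_cases hc : c ∈ Bᶜ
          · have h1 : σ c = σ u := comp_subset huS (hinner c hc b ih (torusAdj_symm hbc.1))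
            have h2 : σ c = σ v := hbc.2.2
            exact absurd (h1.symm.trans h2) hne
          · exact not_not.mp hc
    have hsub : Bᶜ ⊆ (comp {w | σ w = σ v} v)ᶜ := fun w hw hw' => hw (hA0v hw')
    intro x hx
    rw [show (fill σ v u)ᶜ = comp (comp {w | σ w = σ v} v)ᶜ u from compl_compl _]
    exact reach_mono hsub (hreachA x hx)

end TorusInterfaceAux

/-- If neither `u` nor `v` is enclosed by a spin interface, then `σ u = σ v`. -/
theorem spins_equal_of_not_enclosed (N d : ℕ) [NeZero N]
    (σ : (Fin d → ZMod N) → ℤ) (hσ : ∀ w, σ w = 1 ∨ σ w = -1)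
    (u v : Fin d → ZMod N) (hu : ¬ Enclosed σ u) (hv : ¬ Enclosed σ v) :
    σ u = σ v := by
  by_cases hN1 : N = 1
  · subst hN1
    rw [Subsingleton.elim u v]
  · have hN : (1 : ZMod N) ≠ 0 := by
      haveI : Fact (1 < N) := ⟨by have := NeZero.ne N; omega⟩
      exact one_ne_zero
    by_contra hne
    obtain ⟨c1, c1c, hu1, hin1, hout1, hsub1⟩ := TorusInterfaceAux.construct hN σ u v hne
    obtain ⟨c2, c2c, hv2, hin2, hout2, hsub2⟩ :=
      TorusInterfaceAux.construct hN σ v u (Ne.symm hne)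
    set A1 := TorusInterfaceAux.fill σ u v with hA1
    set A2 := TorusInterfaceAux.fill σ v u with hA2
    have hdisj : Disjoint A1 A2 := Set.disjoint_left.mpr fun a h1 h2 => (hsub1 h1) h2
    have hcard : A1.ncard + A2.ncard ≤ Fintype.card (Fin d → ZMod N) := by
      rw [← Set.ncard_union_eq hdisj (Set.toFinite _) (Set.toFinite _)]
      calc (A1 ∪ A2).ncard ≤ (Set.univ : Set (Fin d → ZMod N)).ncard :=
            Set.ncard_le_ncard (Set.subset_univ _) (Set.toFinite _)
        _ = Fintype.card (Fin d → ZMod N) := by rw [Set.ncard_univ, Nat.card_eq_fintype_card]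
    have interface : ∀ (w : Fin d → ZMod N) (A : Set (Fin d → ZMod N)),
        (∀ x ∈ innerBdry A, σ x = σ w) → (∀ y ∈ outerBdry A, σ y ≠ σ w) →
        IsInterface σ A := by
      intro w A hin hout
      rcases hσ w with h | h
      · exact Or.inr ⟨fun x hx => (hin x hx).trans h,
          fun y hy => (hσ y).resolve_left fun h1 => hout y hy (h1.trans h.symm)⟩
      · exact Or.inl ⟨fun x hx => (hin x hx).trans h,
          fun y hy => (hσ y).resolve_right fun h1 => hout y hy (h1.trans h.symm)⟩
    rcases le_or_gt (2 * A1.ncard) (Fintype.card (Fin d → ZMod N)) with h | h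
    · exact hu ⟨A1, c1, c1c, h, interface u A1 hin1 hout1, hu1⟩
    · exact hv ⟨A2, c2, c2c, by omega, interface v A2 hin2 hout2, hv2⟩
end

section
/- Let A ⊆ 𝕋_N^d, M ∈ ℝ, ε > 0, and let (h_v) be any external field. If the ground state τ_M of the RFIM Hamiltonian H(σ) = −Σ_{u∼v} σ_u σ_v − Σ_v (M + ε h_v) σ_v satisfies τ_M ≡ −1 on ∂_i A and τ_M ≡ +1 on ∂_o A (or vice versa), then the ground state energy 𝓗^A_M with respect to the flipped field h^A satisfies 𝓗^A_M ≤ 𝓗_M − 2|∂_e A| + 2|M||A|. -/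
open scoped Classical

/-- `σ` is a `±1`-valued spin configuration. -/
def IsSpin {N d : ℕ} (σ : (Fin d → ZMod N) → ℤ) : Prop :=
  ∀ v, σ v = 1 ∨ σ v = -1

/-- The RFIM Hamiltonian `H(σ) = -Σ_{u∼v} σ_u σ_v - Σ_v (M + ε h_v) σ_v` on the torus
(each unordered edge counted once, via half the ordered sum). -/
noncomputable def ham (N d : ℕ) [NeZero N] (M ε : ℝ)
    (h : (Fin d → ZMod N) → ℝ) (σ : (Fin d → ZMod N) → ℤ) : ℝ :=
  -(1 / 2) * ∑ u : Fin d → ZMod N, ∑ v : Fin d → ZMod N,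
      (if torusAdj u v then (σ u : ℝ) * (σ v : ℝ) else 0)
    - ∑ v : Fin d → ZMod N, (M + ε * h v) * (σ v : ℝ)

/-- Ground state energy: the infimum of the Hamiltonian over spin configurations. -/
noncomputable def groundEnergy (N d : ℕ) [NeZero N] (M ε : ℝ)
    (h : (Fin d → ZMod N) → ℝ) : ℝ :=
  sInf (ham N d M ε h '' {σ | IsSpin σ})

/-- The field obtained from `h` by negating it on `A`. -/
noncomputable def flipField {N d : ℕ} (A : Set (Fin d → ZMod N))
    (h : (Fin d → ZMod N) → ℝ) : (Fin d → ZMod N) → ℝ :=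
  fun v => if v ∈ A then -h v else h v

/-- The edge boundary `∂ₑA`: ordered pairs `(x, y)` with `x ∈ A`, `y ∉ A`, `x ∼ y`. -/
def edgeBdry {N d : ℕ} (A : Set (Fin d → ZMod N)) :
    Set ((Fin d → ZMod N) × (Fin d → ZMod N)) :=
  {p | p.1 ∈ A ∧ p.2 ∉ A ∧ torusAdj p.1 p.2}

/-!
Flipping the ground state `τ` on `A` gives a competitor for the flipped field `h^A`: the
random field term `ε h_v σ_v` is unchanged, the uniform term changes by
`2M ∑_{v ∈ A} τ_v ≤ 2|M||A|`, and each edge of `∂ₑA`, on which the boundary condition makes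
`τ` disagree, becomes satisfied, lowering the interaction energy by `2`.
-/

variable {N d : ℕ}

lemma torusAdj.symm {u v : Fin d → ZMod N} (huv : torusAdj u v) : torusAdj v u := by
  obtain ⟨hne, i, rfl | rfl⟩ := huv
  · exact ⟨hne.symm, i, Or.inr (by simp)⟩
  · exact ⟨hne.symm, i, Or.inl (by simp)⟩

lemma setOf_isSpin_finite [NeZero N] :
    {σ : (Fin d → ZMod N) → ℤ | IsSpin σ}.Finite := by
  refine (Set.Finite.pi (t := fun _ => ({1, -1} : Set ℤ)) fun _ => Set.toFinite _).subset ?_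
  intro σ hσ v _
  exact hσ v

lemma groundEnergy_le_ham [NeZero N] (M ε : ℝ) (h : (Fin d → ZMod N) → ℝ)
    {σ : (Fin d → ZMod N) → ℤ} (hσ : IsSpin σ) :
    groundEnergy N d M ε h ≤ ham N d M ε h σ :=
  csInf_le (setOf_isSpin_finite.image _).bddBelow ⟨σ, hσ, rfl⟩

noncomputable def flipSpins {α : Type*} (A : Set α) (σ : α → ℤ) : α → ℤ :=
  fun v => if v ∈ A then -σ v else σ v

lemma IsSpin.flipSpins {σ : (Fin d → ZMod N) → ℤ} (hσ : IsSpin σ)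
    (A : Set (Fin d → ZMod N)) :
    IsSpin (flipSpins A σ) := by
  intro v
  by_cases hv : v ∈ A <;> rcases hσ v with h | h <;> simp [_root_.flipSpins, hv, h]

lemma sum_sum_ite_mem_eq {α β R : Type*} [Fintype α] [Fintype β] [AddCommMonoid R]
    (s : Set (α × β)) (f : α → β → R) :
    ∑ a, ∑ b, (if (a, b) ∈ s then f a b else 0) = ∑ p ∈ s.toFinset, f p.1 p.2 := by
  rw [← Fintype.sum_prod_type' (fun a b => if (a, b) ∈ s then f a b else 0),
    ← Finset.sum_ite_mem_eq s.toFinset]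
  simp only [Set.mem_toFinset]

lemma sum_sum_adj_flipSpins [NeZero N] (A : Set (Fin d → ZMod N))
    (σ : (Fin d → ZMod N) → ℤ) :
    ∑ u, ∑ v, (if torusAdj u v then (flipSpins A σ u : ℝ) * flipSpins A σ v else 0)
      = ∑ u, ∑ v, (if torusAdj u v then (σ u : ℝ) * σ v else 0)
        - 4 * ∑ p ∈ (edgeBdry A).toFinset, (σ p.1 : ℝ) * σ p.2 := by
  have hterm : ∀ u v, (if torusAdj u v then (flipSpins A σ u : ℝ) * flipSpins A σ v else 0)
      = (if torusAdj u v then (σ u : ℝ) * σ v else 0)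
        - 2 * (if (u, v) ∈ edgeBdry A then (σ u : ℝ) * σ v else 0)
        - 2 * (if (v, u) ∈ edgeBdry A then (σ v : ℝ) * σ u else 0) := by
    intro u v
    by_cases hadj : torusAdj u v
    · by_cases hu : u ∈ A <;> by_cases hv : v ∈ A <;>
        simp [flipSpins, edgeBdry, hadj, hadj.symm, hu, hv] <;> ring
    · have hadj' : ¬ torusAdj v u := fun h => hadj h.symm
      simp [edgeBdry, hadj, hadj']
  simp only [hterm, Finset.sum_sub_distrib, ← Finset.mul_sum]
  rw [Finset.sum_comm (f := fun u v => if (v, u) ∈ edgeBdry A then (σ v : ℝ) * σ u else 0),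
    sum_sum_ite_mem_eq]
  ring

lemma sum_field_flipSpins [NeZero N] (A : Set (Fin d → ZMod N)) (M ε : ℝ)
    (h : (Fin d → ZMod N) → ℝ) (σ : (Fin d → ZMod N) → ℤ) :
    ∑ v, (M + ε * flipField A h v) * (flipSpins A σ v : ℝ)
      = ∑ v, (M + ε * h v) * (σ v : ℝ) - 2 * M * ∑ v ∈ A.toFinset, (σ v : ℝ) := by
  rw [← Finset.sum_ite_mem_eq A.toFinset, Finset.mul_sum, ← Finset.sum_sub_distrib]
  refine Finset.sum_congr rfl fun v _ => ?_
  by_cases hv : v ∈ A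
  · simp only [flipField, flipSpins, hv, if_true, Set.mem_toFinset]
    push_cast
    ring
  · simp [flipField, flipSpins, hv]

lemma ham_flipField_flipSpins [NeZero N] (A : Set (Fin d → ZMod N)) (M ε : ℝ)
    (h : (Fin d → ZMod N) → ℝ) (σ : (Fin d → ZMod N) → ℤ) :
    ham N d M ε (flipField A h) (flipSpins A σ)
      = ham N d M ε h σ + 2 * ∑ p ∈ (edgeBdry A).toFinset, (σ p.1 : ℝ) * σ p.2
        + 2 * M * ∑ v ∈ A.toFinset, (σ v : ℝ) := by
  rw [ham, ham, sum_sum_adj_flipSpins, sum_field_flipSpins]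
  ring

lemma mul_sum_le_abs_mul_ncard [NeZero N] {σ : (Fin d → ZMod N) → ℤ} (hσ : IsSpin σ)
    (A : Set (Fin d → ZMod N)) (M : ℝ) :
    M * ∑ v ∈ A.toFinset, (σ v : ℝ) ≤ |M| * A.ncard := by
  have habs : ∀ v, |(σ v : ℝ)| = 1 := fun v => by rcases hσ v with h | h <;> simp [h]
  calc M * ∑ v ∈ A.toFinset, (σ v : ℝ) ≤ |M| * |∑ v ∈ A.toFinset, (σ v : ℝ)| := by
        rw [← abs_mul]; exact le_abs_self _
    _ ≤ |M| * ∑ v ∈ A.toFinset, |(σ v : ℝ)| :=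
        mul_le_mul_of_nonneg_left (Finset.abs_sum_le_sum_abs _ _) (abs_nonneg M)
    _ = |M| * A.ncard := by simp [habs, Set.ncard_eq_toFinset_card']

lemma sum_edgeBdry_eq_neg_ncard [NeZero N] {A : Set (Fin d → ZMod N)}
    {σ : (Fin d → ZMod N) → ℤ}
    (hbdry :
      ((∀ x, x ∈ A → (∃ y, y ∉ A ∧ torusAdj x y) → σ x = -1) ∧
        (∀ y, y ∉ A → (∃ x, x ∈ A ∧ torusAdj y x) → σ y = 1)) ∨
      ((∀ x, x ∈ A → (∃ y, y ∉ A ∧ torusAdj x y) → σ x = 1) ∧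
        (∀ y, y ∉ A → (∃ x, x ∈ A ∧ torusAdj y x) → σ y = -1))) :
    ∑ p ∈ (edgeBdry A).toFinset, (σ p.1 : ℝ) * σ p.2 = -(edgeBdry A).ncard := by
  have hcross : ∀ p ∈ (edgeBdry A).toFinset, (σ p.1 : ℝ) * σ p.2 = -1 := by
    rintro ⟨x, y⟩ hp
    obtain ⟨hx, hy, hxy⟩ := Set.mem_toFinset.mp hp
    rcases hbdry with ⟨hin, hout⟩ | ⟨hin, hout⟩ <;>
      simp [hin x hx ⟨y, hy, hxy⟩, hout y hy ⟨x, hx, hxy.symm⟩]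
  simp [Finset.sum_congr rfl hcross, Set.ncard_eq_toFinset_card']

theorem groundEnergy_flip_le_general (N d : ℕ) [NeZero N] (A : Set (Fin d → ZMod N))
    (M ε : ℝ) (h : (Fin d → ZMod N) → ℝ)
    (τ : (Fin d → ZMod N) → ℤ) (hτ : IsSpin τ)
    (hmin : ham N d M ε h τ = groundEnergy N d M ε h)
    (hbdry :
      ((∀ x, x ∈ A → (∃ y, y ∉ A ∧ torusAdj x y) → τ x = -1) ∧
        (∀ y, y ∉ A → (∃ x, x ∈ A ∧ torusAdj y x) → τ y = 1)) ∨
      ((∀ x, x ∈ A → (∃ y, y ∉ A ∧ torusAdj x y) → τ x = 1) ∧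
        (∀ y, y ∉ A → (∃ x, x ∈ A ∧ torusAdj y x) → τ y = -1))) :
    groundEnergy N d M ε (flipField A h)
      ≤ groundEnergy N d M ε h - 2 * (edgeBdry A).ncard + 2 * |M| * A.ncard := by
  calc groundEnergy N d M ε (flipField A h)
      ≤ ham N d M ε (flipField A h) (flipSpins A τ) :=
        groundEnergy_le_ham M ε _ (hτ.flipSpins A)
    _ = ham N d M ε h τ - 2 * (edgeBdry A).ncard
          + 2 * (M * ∑ v ∈ A.toFinset, (τ v : ℝ)) := by
        rw [ham_flipField_flipSpins, sum_edgeBdry_eq_neg_ncard hbdry]; ring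
    _ ≤ groundEnergy N d M ε h - 2 * (edgeBdry A).ncard + 2 * |M| * A.ncard := by
        rw [hmin]; linarith [mul_sum_le_abs_mul_ncard hτ A M]

/-- If the ground state `τ` is `-1` on the inner boundary of `A` and `+1` on its outer
boundary (or vice versa), then the ground state energy for the flipped field `h^A`
satisfies `𝓗^A_M ≤ 𝓗_M - 2|∂ₑA| + 2|M||A|`. -/
theorem groundEnergy_flip_le (N d : ℕ) [NeZero N] (A : Set (Fin d → ZMod N))
    (M ε : ℝ) (hε : 0 < ε) (h : (Fin d → ZMod N) → ℝ)
    (τ : (Fin d → ZMod N) → ℤ) (hτ : IsSpin τ)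
    (hmin : ham N d M ε h τ = groundEnergy N d M ε h)
    (hbdry :
      ((∀ x, x ∈ A → (∃ y, y ∉ A ∧ torusAdj x y) → τ x = -1) ∧
        (∀ y, y ∉ A → (∃ x, x ∈ A ∧ torusAdj y x) → τ y = 1)) ∨
      ((∀ x, x ∈ A → (∃ y, y ∉ A ∧ torusAdj x y) → τ x = 1) ∧
        (∀ y, y ∉ A → (∃ x, x ∈ A ∧ torusAdj y x) → τ y = -1))) :
    groundEnergy N d M ε (flipField A h)
      ≤ groundEnergy N d M ε h - 2 * (edgeBdry A).ncard + 2 * |M| * A.ncard :=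
  groundEnergy_flip_le_general N d A M ε h τ hτ hmin hbdry
end
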